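/- arXiv:2411.08271 — 3 statements merged into one kernel-verified Lean document; each statement's English description precedes it below -/
import Mathlib

section
/- For ε > 0 and k ≥ 2, the piecewise function F_k^ε (equal to F(ρ) = ρ ln ρ − ρ for ρ ≥ ε² and to P_{k+1}^ε(ρ) for 0 ≤ ρ < ε²) is differentiable at ρ = ε² with derivative ln(ε²): both one-sided derivatives agree and equal ln(ε²). -/
/-!
On `ρ ≥ ε²` the derivative of `ρ ln ρ − ρ` is `ln ρ`, i.e. `ln ε²` at the junction. On the other
side `P(ρ) = ρ (ln ε² − 1 − S_k(1 − ρ/ε²))`, where `S_k(t) = ∑_{j ≤ k} t^j / j` is the Taylor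
polynomial of `−ln(1 − t)`; since `S_k(0) = 0` and `S_k'(0) = 1` for `k ≥ 1`, the product rule gives
`P'(ε²) = (ln ε² − 1) + ε² · (1/ε²) = ln ε²`. Both pieces take the value `ε² ln ε² − ε²` there,
so the two one-sided derivatives glue.
-/

open Real Finset

theorem HasDerivAt.ite_le {F : Type*} [NormedAddCommGroup F] [NormedSpace ℝ F]
    {f g : ℝ → F} {f' : F} {a : ℝ} (hf : HasDerivAt f f' a) (hg : HasDerivAt g f' a)
    (hfg : f a = g a) : HasDerivAt (fun x => if a ≤ x then g x else f x) f' a := by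
  have hleft : HasDerivWithinAt (fun x => if a ≤ x then g x else f x) f' (Set.Iic a) a := by
    refine hf.hasDerivWithinAt.congr (fun x hx => ?_) (by simp [hfg])
    rcases (Set.mem_Iic.mp hx).lt_or_eq with hlt | rfl
    · simp [not_le.mpr hlt]
    · simp [hfg]
  have hright : HasDerivWithinAt (fun x => if a ≤ x then g x else f x) f' (Set.Ici a) a :=
    hg.hasDerivWithinAt.congr (fun x hx => by simp [Set.mem_Ici.mp hx]) (by simp)
  simpa [Set.Iic_union_Ici] using (hleft.union hright).hasDerivAt (by simp)

noncomputable def negLogTaylor (k : ℕ) (t : ℝ) : ℝ :=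
  ∑ j ∈ Icc 1 k, (1 / (j : ℝ)) * t ^ j

@[simp]
theorem negLogTaylor_zero_right (k : ℕ) : negLogTaylor k 0 = 0 :=
  sum_eq_zero fun j hj => by simp [zero_pow (by grind : j ≠ 0)]

theorem hasDerivAt_negLogTaylor_zero {k : ℕ} (hk : 1 ≤ k) :
    HasDerivAt (negLogTaylor k) 1 0 := by
  have hterm : ∀ j ∈ Icc 1 k, HasDerivAt (fun t : ℝ => (1 / (j : ℝ)) * t ^ j)
      ((1 / (j : ℝ)) * ((j : ℝ) * 0 ^ (j - 1))) 0 :=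
    fun j _ => (hasDerivAt_pow j 0).const_mul _
  have hsum : ∑ j ∈ Icc 1 k, (1 / (j : ℝ)) * ((j : ℝ) * 0 ^ (j - 1)) = 1 := by
    rw [sum_eq_single_of_mem 1 (by simp [hk])]
    · norm_num
    · intro j hj hj1
      simp [zero_pow (by grind : j - 1 ≠ 0)]
  rw [← hsum]
  exact HasDerivAt.fun_sum hterm

/-- The left piece `P_{k+1}^ε` of the paper, written with `c = ε²`. -/
theorem hasDerivAt_mul_sub_negLogTaylor {c : ℝ} (hc : c ≠ 0) {k : ℕ} (hk : 1 ≤ k) :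
    HasDerivAt (fun ρ => ρ * (log c - 1 - negLogTaylor k (1 - ρ / c))) (log c) c := by
  have hinner : HasDerivAt (fun ρ : ℝ => 1 - ρ / c) (-(1 / c)) c := by
    simpa using ((hasDerivAt_id c).div_const c).const_sub 1
  have hS : HasDerivAt (fun ρ => negLogTaylor k (1 - ρ / c)) (1 * -(1 / c)) c :=
    (hasDerivAt_negLogTaylor_zero hk).comp_of_eq c hinner (by simp [div_self hc])
  refine ((hasDerivAt_id' c).fun_mul (hS.const_sub (log c - 1))).congr_deriv ?_
  rw [div_self hc, sub_self, negLogTaylor_zero_right]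
  field_simp
  ring

theorem hasDerivAt_mul_log_sub_self {x : ℝ} (hx : x ≠ 0) :
    HasDerivAt (fun ρ => ρ * log ρ - ρ) (log x) x := by
  simpa using (hasDerivAt_mul_log hx).fun_sub (hasDerivAt_id' x)

/-- The piecewise regularized energy density `F_k^ε` (equal to `F ρ = ρ ln ρ − ρ` for
`ρ ≥ ε²` and to `P_{k+1}^ε(ρ)` for `ρ < ε²`) is differentiable at `ρ = ε²`
with derivative `ln(ε²)`. -/
theorem stmt6 (ε : ℝ) (hε : 0 < ε) (k : ℕ) (hk : 2 ≤ k)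
    (P : ℝ → ℝ)
    (hP : ∀ ρ : ℝ, P ρ =
      ρ * (Real.log (ε ^ 2) - 1 - ∑ j ∈ Finset.Icc 1 k, (1 / (j : ℝ)) * (1 - ρ / ε ^ 2) ^ j))
    (Fk : ℝ → ℝ)
    (hFk : ∀ ρ : ℝ, Fk ρ = if ε ^ 2 ≤ ρ then ρ * Real.log ρ - ρ else P ρ) :
    HasDerivAt Fk (Real.log (ε ^ 2)) (ε ^ 2) := by
  have hc : ε ^ 2 ≠ 0 := by positivity
  have hP' : P = fun ρ => ρ * (log (ε ^ 2) - 1 - negLogTaylor k (1 - ρ / ε ^ 2)) := funext hP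
  rw [show Fk = _ from funext hFk]
  refine HasDerivAt.ite_le ?_ (hasDerivAt_mul_log_sub_self hc) ?_
  · rw [hP']
    exact hasDerivAt_mul_sub_negLogTaylor hc (by omega)
  · simp only [hP', div_self hc, sub_self, negLogTaylor_zero_right, sub_zero]
    ring
end

section
/- If the relaxation coefficient satisfies γ_n = 1 + O(τ^{p−1}) and the base IMEX RK update Φ_n has local truncation error O(τ^{p+1}), then the relaxed update u^{ε,n+1}_γ = Φ_n + (γ_n − 1)(Φ_n − u^{ε,n}_γ) evaluated at the shifted time t̂_{n+1} = t̂_n + γ_n τ also has local truncation error O(τ^{p+1}). -/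
/-! Expanding `u` to second order around the unrelaxed time `tₙ + τ`, both in the direction of the
shifted time `tₙ + γτ` and back to `tₙ`, the first-order terms of the relaxed update cancel
exactly. What remains is `(γ - 1)²τ²` and `|γ - 1| τ²` times a bound on `u''`, plus `γ` times the
truncation error of `Φ`; with `γ - 1 = O(τ^{p-1})` all three are `O(τ^{p+1})`. -/

open Set Metric

section Taylor

variable {E : Type*} [NormedAddCommGroup E] [NormedSpace ℝ E]
  {f : ℝ → E} {s : Set ℝ} {M : ℝ}

theorem Convex.norm_image_sub_sub_smul_deriv_le (hs : Convex ℝ s)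
    (hf : ∀ x ∈ s, DifferentiableAt ℝ f x) (hf' : ∀ x ∈ s, DifferentiableAt ℝ (deriv f) x)
    (hM : ∀ x ∈ s, ‖deriv (deriv f) x‖ ≤ M) {a b : ℝ} (ha : a ∈ s) (hb : b ∈ s) :
    ‖f b - f a - (b - a) • deriv f a‖ ≤ M * (b - a) ^ 2 := by
  have hab : uIcc a b ⊆ s := segment_eq_uIcc a b ▸ hs.segment_subset ha hb
  have hg : ∀ x ∈ uIcc a b, HasDerivWithinAt (fun x ↦ f x - x • deriv f a)
      (deriv f x - deriv f a) (uIcc a b) x := fun x hx ↦ by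
    have := (hf x (hab hx)).hasDerivAt.sub ((hasDerivAt_id' x).smul_const (deriv f a))
    rw [one_smul] at this
    exact this.hasDerivWithinAt
  have hg' : ∀ x ∈ uIcc a b, ‖deriv f x - deriv f a‖ ≤ M * |b - a| := fun x hx ↦ by
    have hM0 : 0 ≤ M := (norm_nonneg _).trans (hM a ha)
    calc ‖deriv f x - deriv f a‖ ≤ M * ‖x - a‖ :=
          hs.norm_image_sub_le_of_norm_deriv_le hf' hM ha (hab hx)
      _ ≤ M * |b - a| := mul_le_mul_of_nonneg_left (abs_sub_left_of_mem_uIcc hx) hM0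
  calc ‖f b - f a - (b - a) • deriv f a‖
      = ‖(f b - b • deriv f a) - (f a - a • deriv f a)‖ := by congr 1; module
    _ ≤ M * |b - a| * ‖b - a‖ := (convex_uIcc a b).norm_image_sub_le_of_norm_hasDerivWithin_le
          hg hg' left_mem_uIcc right_mem_uIcc
    _ = M * (b - a) ^ 2 := by rw [Real.norm_eq_abs, mul_assoc, abs_mul_abs_self, sq]

theorem Convex.norm_relaxed_step_error_le (hs : Convex ℝ s)
    (hf : ∀ x ∈ s, DifferentiableAt ℝ f x) (hf' : ∀ x ∈ s, DifferentiableAt ℝ (deriv f) x)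
    (hM : ∀ x ∈ s, ‖deriv (deriv f) x‖ ≤ M) {t τ γ : ℝ} (Φ : E)
    (h₀ : t ∈ s) (h₁ : t + τ ∈ s) (hγ : t + γ * τ ∈ s) :
    ‖f (t + γ * τ) - Φ - (γ - 1) • (Φ - f t)‖
      ≤ M * ((γ - 1) * τ) ^ 2 + |γ - 1| * (M * τ ^ 2) + |γ| * ‖Φ - f (t + τ)‖ := by
  set d := deriv f (t + τ)
  have hforward := hs.norm_image_sub_sub_smul_deriv_le hf hf' hM h₁ hγ
  have hbackward := hs.norm_image_sub_sub_smul_deriv_le hf hf' hM h₁ h₀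
  rw [show t + γ * τ - (t + τ) = (γ - 1) * τ by ring] at hforward
  rw [show t - (t + τ) = -τ by ring, neg_sq] at hbackward
  calc ‖f (t + γ * τ) - Φ - (γ - 1) • (Φ - f t)‖
      = ‖(f (t + γ * τ) - f (t + τ) - ((γ - 1) * τ) • d)
          + (γ - 1) • (f t - f (t + τ) - (-τ) • d) - γ • (Φ - f (t + τ))‖ := by
        congr 1; module
    _ ≤ ‖f (t + γ * τ) - f (t + τ) - ((γ - 1) * τ) • d‖
          + |γ - 1| * ‖f t - f (t + τ) - (-τ) • d‖ + |γ| * ‖Φ - f (t + τ)‖ := by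
        refine (norm_sub_le _ _).trans ?_
        rw [norm_smul, Real.norm_eq_abs]
        gcongr
        refine (norm_add_le _ _).trans ?_
        rw [norm_smul, Real.norm_eq_abs]
    _ ≤ M * ((γ - 1) * τ) ^ 2 + |γ - 1| * (M * τ ^ 2) + |γ| * ‖Φ - f (t + τ)‖ := by
        gcongr

theorem norm_relaxed_step_error_le_pow (hf : Differentiable ℝ f)
    (hf' : Differentiable ℝ (deriv f)) {t τ γ C₁ C₂ : ℝ} {p : ℕ} (Φ : E)
    (hM : ∀ x ∈ closedBall t (1 + C₂), ‖deriv (deriv f) x‖ ≤ M) (hτ : 0 < τ) (hτ1 : τ ≤ 1)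
    (hΦ : ‖Φ - f (t + τ)‖ ≤ C₁ * τ ^ (p + 1)) (hγ : |γ - 1| ≤ C₂ * τ ^ (p - 1)) :
    ‖f (t + γ * τ) - Φ - (γ - 1) • (Φ - f t)‖
      ≤ (M * C₂ ^ 2 + M * C₂ + (1 + C₂) * C₁) * τ ^ (p + 1) := by
  have hC₂ : 0 ≤ C₂ := nonneg_of_mul_nonneg_left ((abs_nonneg _).trans hγ) (pow_pos hτ _)
  have hM₀ : 0 ≤ M := (norm_nonneg _).trans (hM t (mem_closedBall_self (by positivity)))
  have hγC₂ : |γ - 1| ≤ C₂ := hγ.trans (mul_le_of_le_one_right hC₂ (pow_le_one₀ hτ.le hτ1))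
  have hγabs : |γ| ≤ 1 + C₂ := by linarith [abs_sub_abs_le_abs_sub γ 1, abs_one (α := ℝ)]
  have hγτ : |γ - 1| * τ ^ 2 ≤ C₂ * τ ^ (p + 1) :=
    calc |γ - 1| * τ ^ 2 ≤ C₂ * (τ ^ (p - 1) * τ ^ 2) := by rw [← mul_assoc]; gcongr
      _ ≤ C₂ * τ ^ (p + 1) := by
        rw [← pow_add]
        exact mul_le_mul_of_nonneg_left (pow_le_pow_of_le_one hτ.le hτ1 (by omega)) hC₂
  have hmem : ∀ x : ℝ, |x| ≤ 1 + C₂ → t + x ∈ closedBall t (1 + C₂) := fun x hx ↦ by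
    rwa [mem_closedBall, Real.dist_eq, add_sub_cancel_left]
  have hsγ : t + γ * τ ∈ closedBall t (1 + C₂) := hmem _ <| by
    rw [abs_mul, abs_of_pos hτ]; nlinarith [abs_nonneg γ]
  have hsτ : t + τ ∈ closedBall t (1 + C₂) := hmem _ <| by rw [abs_of_pos hτ]; linarith
  calc ‖f (t + γ * τ) - Φ - (γ - 1) • (Φ - f t)‖
      ≤ M * ((γ - 1) * τ) ^ 2 + |γ - 1| * (M * τ ^ 2) + |γ| * ‖Φ - f (t + τ)‖ :=
        (convex_closedBall t _).norm_relaxed_step_error_le (fun x _ ↦ hf x) (fun x _ ↦ hf' x)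
          hM Φ (mem_closedBall_self (by positivity)) hsτ hsγ
    _ = M * |γ - 1| * (|γ - 1| * τ ^ 2) + M * (|γ - 1| * τ ^ 2) + |γ| * ‖Φ - f (t + τ)‖ := by
        rw [mul_pow, ← sq_abs (γ - 1)]; ring
    _ ≤ M * C₂ * (C₂ * τ ^ (p + 1)) + M * (C₂ * τ ^ (p + 1)) + (1 + C₂) * (C₁ * τ ^ (p + 1)) := by
        gcongr
    _ = (M * C₂ ^ 2 + M * C₂ + (1 + C₂) * C₁) * τ ^ (p + 1) := by ring

end Taylor

theorem stmt13_general {H : Type*} [NormedAddCommGroup H] [NormedSpace ℝ H]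
    (u : ℝ → H) (hu : ContDiff ℝ 2 u)
    (p : ℕ) (tn : ℝ)
    (γ : ℝ → ℝ) (Φ : ℝ → H) (τ₀ C₁ C₂ : ℝ) (hτ₀ : 0 < τ₀)
    (hΦ : ∀ τ ∈ Set.Ioc (0 : ℝ) τ₀, ‖Φ τ - u (tn + τ)‖ ≤ C₁ * τ ^ (p + 1))
    (hγ : ∀ τ ∈ Set.Ioc (0 : ℝ) τ₀, |γ τ - 1| ≤ C₂ * τ ^ (p - 1)) :
    ∃ C₃ > (0 : ℝ), ∃ τ₁ > (0 : ℝ), ∀ τ ∈ Set.Ioc (0 : ℝ) τ₁,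
      ‖u (tn + γ τ * τ) - Φ τ - (γ τ - 1) • (Φ τ - u tn)‖ ≤ C₃ * τ ^ (p + 1) := by
  have hC₁ : 0 ≤ C₁ := nonneg_of_mul_nonneg_left
    ((norm_nonneg _).trans (hΦ τ₀ ⟨hτ₀, le_rfl⟩)) (pow_pos hτ₀ _)
  have hC₂ : 0 ≤ C₂ := nonneg_of_mul_nonneg_left
    ((abs_nonneg _).trans (hγ τ₀ ⟨hτ₀, le_rfl⟩)) (pow_pos hτ₀ _)
  obtain ⟨M, hM⟩ := (isCompact_closedBall tn (1 + C₂)).exists_bound_of_continuousOn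
    (f := deriv (deriv u)) (by simpa [iteratedDeriv_succ] using
      (hu.continuous_iteratedDeriv 2 le_rfl).continuousOn)
  have hM₀ : 0 ≤ M := (norm_nonneg _).trans (hM tn (mem_closedBall_self (by positivity)))
  refine ⟨M * C₂ ^ 2 + M * C₂ + (1 + C₂) * C₁ + 1, by positivity, min τ₀ 1, by positivity, ?_⟩
  rintro τ ⟨hτ, hτ₁⟩
  have hτ₀' : τ ∈ Ioc 0 τ₀ := ⟨hτ, hτ₁.trans (min_le_left _ _)⟩
  calc ‖u (tn + γ τ * τ) - Φ τ - (γ τ - 1) • (Φ τ - u tn)‖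
      ≤ (M * C₂ ^ 2 + M * C₂ + (1 + C₂) * C₁) * τ ^ (p + 1) :=
        norm_relaxed_step_error_le_pow (hu.differentiable (by norm_num))
          (by simpa using hu.differentiable_iteratedDeriv 1 (by norm_num)) (Φ τ) hM hτ
          (hτ₁.trans (min_le_right _ _)) (hΦ τ hτ₀') (hγ τ hτ₀')
    _ ≤ (M * C₂ ^ 2 + M * C₂ + (1 + C₂) * C₁ + 1) * τ ^ (p + 1) :=
        mul_le_mul_of_nonneg_right (le_add_of_nonneg_right zero_le_one) (by positivity)

/-- If the relaxation coefficient satisfies `γ(τ) = 1 + O(τ^{p−1})` and the base IMEX RK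
update `Φ(τ)` has local truncation error `O(τ^{p+1})` (i.e. `Φ(τ) = u(tn + τ) + O(τ^{p+1})`),
then the relaxed update `Φ + (γ − 1)(Φ − u(tn))`, compared with the exact solution at the
shifted time `tn + γτ`, also has local truncation error `O(τ^{p+1})`. -/
theorem stmt13 {H : Type*} [NormedAddCommGroup H] [NormedSpace ℝ H]
    (u : ℝ → H) (hu : ContDiff ℝ 2 u)
    (p : ℕ) (hp : 2 ≤ p) (tn : ℝ)
    (γ : ℝ → ℝ) (Φ : ℝ → H) (τ₀ C₁ C₂ : ℝ) (hτ₀ : 0 < τ₀)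
    (hΦ : ∀ τ ∈ Set.Ioc (0 : ℝ) τ₀, ‖Φ τ - u (tn + τ)‖ ≤ C₁ * τ ^ (p + 1))
    (hγ : ∀ τ ∈ Set.Ioc (0 : ℝ) τ₀, |γ τ - 1| ≤ C₂ * τ ^ (p - 1)) :
    ∃ C₃ > (0 : ℝ), ∃ τ₁ > (0 : ℝ), ∀ τ ∈ Set.Ioc (0 : ℝ) τ₁,
      ‖u (tn + γ τ * τ) - Φ τ - (γ τ - 1) • (Φ τ - u tn)‖ ≤ C₃ * τ ^ (p + 1) :=
  stmt13_general u hu p tn γ Φ τ₀ C₁ C₂ hτ₀ hΦ hγ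
end

section
/- For ε > 0 and k ≥ 2, and for all ρ ≥ 0, F_k^ε(ρ) ≥ F(ρ) − C_k ρ where F(ρ) = ρ ln ρ − ρ and C_k = (k+1)/k + Σ_{j=1}^{k−1} 1/j; more simply, for ρ ∈ (0, ε²], the difference satisfies |f_k^ε(ρ) − ln ρ| ≤ C_k + ln(ε²/ρ), quantifying the regularization error of the nonlinearity. -/
/-!
With `u = 1 - ρ/ε² ∈ [0, 1]` on `[0, ε²]`, the regularized quantities differ from
`ln ε²` only by truncated series `Σ_{j ≤ m} u^j / j`, each bounded between `0` and its value
at `u = 1`, the harmonic number `H_m`. Since `H_k ≤ C_k`, the energy density loses at most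
`C_k ρ`, while for the nonlinearity `ln ε² - ln ρ = ln(ε²/ρ) ≥ 0` absorbs the
remaining sign.
-/

open Finset Real

noncomputable def regConst (k : ℕ) : ℝ :=
  ((k : ℝ) + 1) / k + ∑ j ∈ Icc 1 (k - 1), (1 / (j : ℝ))

lemma regConst_nonneg (k : ℕ) : 0 ≤ regConst k := by
  unfold regConst
  have : 0 ≤ ∑ j ∈ Icc 1 (k - 1), (1 / (j : ℝ)) := sum_nonneg fun j _ => by positivity
  positivity

lemma sum_Icc_one_div_le_regConst (k : ℕ) : ∑ j ∈ Icc 1 k, (1 / (j : ℝ)) ≤ regConst k := by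
  unfold regConst
  cases k with
  | zero => simp
  | succ m =>
    rw [Nat.add_sub_cancel, sum_Icc_succ_top (by omega), add_comm]
    gcongr
    linarith

section TruncatedSeries

variable {u : ℝ} (m : ℕ)

lemma sum_Icc_one_div_mul_pow_nonneg (hu : 0 ≤ u) :
    0 ≤ ∑ j ∈ Icc 1 m, (1 / (j : ℝ)) * u ^ j :=
  sum_nonneg fun j _ => by positivity

lemma sum_Icc_one_div_mul_pow_le (hu₀ : 0 ≤ u) (hu₁ : u ≤ 1) :
    ∑ j ∈ Icc 1 m, (1 / (j : ℝ)) * u ^ j ≤ ∑ j ∈ Icc 1 m, (1 / (j : ℝ)) :=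
  sum_le_sum fun j _ => mul_le_of_le_one_right (by positivity) (pow_le_one₀ hu₀ hu₁)

end TruncatedSeries

lemma one_sub_div_mem_Icc {ρ a : ℝ} (hρ₀ : 0 ≤ ρ) (hρa : ρ ≤ a) :
    1 - ρ / a ∈ Set.Icc (0 : ℝ) 1 := by
  have h₀ : 0 ≤ ρ / a := div_nonneg hρ₀ (hρ₀.trans hρa)
  have h₁ : ρ / a ≤ 1 := div_le_one_of_le₀ hρa (hρ₀.trans hρa)
  constructor <;> linarith

lemma mul_log_sub_sub_le {ρ a S C : ℝ} (hρ₀ : 0 ≤ ρ) (hρa : ρ ≤ a) (hSC : S ≤ C) :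
    ρ * log ρ - ρ - C * ρ ≤ ρ * (log a - 1 - S) := by
  rcases hρ₀.eq_or_lt with rfl | hρ
  · simp
  · have := log_le_log hρ hρa
    nlinarith

lemma abs_log_sub_sub_sub_log_le {ρ a A B c₁ c₂ : ℝ} (hρ₀ : 0 < ρ) (hρa : ρ ≤ a)
    (hA₀ : 0 ≤ A) (hA : A ≤ c₁) (hB₀ : 0 ≤ B) (hB : B ≤ c₂) :
    |log a - A - B - log ρ| ≤ c₁ + c₂ + log (a / ρ) := by
  have hlog : log (a / ρ) = log a - log ρ := log_div (hρ₀.trans_le hρa).ne' hρ₀.ne'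
  have hlog₀ : 0 ≤ log (a / ρ) := log_nonneg ((one_le_div hρ₀).2 hρa)
  rw [abs_le]
  constructor <;> linarith

theorem stmt16_general (ε : ℝ) (k : ℕ)
    (Ck : ℝ) (hCk : Ck = ((k : ℝ) + 1) / k + ∑ j ∈ Finset.Icc 1 (k - 1), (1 / (j : ℝ)))
    (F : ℝ → ℝ) (hF : ∀ ρ : ℝ, F ρ = ρ * Real.log ρ - ρ)
    (P : ℝ → ℝ)
    (hP : ∀ ρ : ℝ, P ρ =
      ρ * (Real.log (ε ^ 2) - 1 - ∑ j ∈ Finset.Icc 1 k, (1 / (j : ℝ)) * (1 - ρ / ε ^ 2) ^ j))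
    (Fk : ℝ → ℝ)
    (hFk : ∀ ρ : ℝ, Fk ρ = if ε ^ 2 ≤ ρ then F ρ else P ρ)
    (f : ℝ → ℝ)
    (hf : ∀ ρ : ℝ, 0 < ρ → ρ < ε ^ 2 → f ρ =
      Real.log (ε ^ 2) - ((k : ℝ) + 1) / k * (1 - ρ / ε ^ 2) ^ k
        - ∑ j ∈ Finset.Icc 1 (k - 1), (1 / (j : ℝ)) * (1 - ρ / ε ^ 2) ^ j)
    (hf' : ∀ ρ : ℝ, ε ^ 2 ≤ ρ → f ρ = Real.log ρ) :
    (∀ ρ : ℝ, 0 ≤ ρ → F ρ - Ck * ρ ≤ Fk ρ) ∧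
      (∀ ρ ∈ Set.Ioc (0 : ℝ) (ε ^ 2),
        |f ρ - Real.log ρ| ≤ Ck + Real.log (ε ^ 2 / ρ)) := by
  have hCk₀ : 0 ≤ Ck := hCk ▸ regConst_nonneg k
  constructor
  · intro ρ hρ
    rw [hFk]
    split_ifs with hερ
    · exact sub_le_self _ (mul_nonneg hCk₀ hρ)
    · obtain ⟨hu₀, hu₁⟩ := one_sub_div_mem_Icc hρ (not_le.1 hερ).le
      rw [hF, hP]
      refine mul_log_sub_sub_le hρ (not_le.1 hερ).le ?_
      exact (sum_Icc_one_div_mul_pow_le k hu₀ hu₁).trans (hCk ▸ sum_Icc_one_div_le_regConst k)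
  · rintro ρ ⟨hρ₀, hρε⟩
    rcases hρε.lt_or_eq with hlt | rfl
    · obtain ⟨hu₀, hu₁⟩ := one_sub_div_mem_Icc hρ₀.le hρε
      rw [hf ρ hρ₀ hlt, hCk]
      refine abs_log_sub_sub_sub_log_le hρ₀ hρε (by positivity) ?_
        (sum_Icc_one_div_mul_pow_nonneg _ hu₀) (sum_Icc_one_div_mul_pow_le _ hu₀ hu₁)
      exact mul_le_of_le_one_right (by positivity) (pow_le_one₀ hu₀ hu₁)
    · rw [hf' _ le_rfl, sub_self, abs_zero, div_self hρ₀.ne', log_one, add_zero]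
      exact hCk₀

/-- Regularization error of the energy density and nonlinearity: with
`C_k = (k+1)/k + Σ_{j=1}^{k−1} 1/j`, one has `F_k^ε(ρ) ≥ F(ρ) − C_k ρ` for all `ρ ≥ 0`
(`F ρ = ρ ln ρ − ρ`), and for `ρ ∈ (0, ε²]` the nonlinearity satisfies
`|f_k^ε(ρ) − ln ρ| ≤ C_k + ln(ε²/ρ)`. -/
theorem stmt16 (ε : ℝ) (hε : 0 < ε) (k : ℕ) (hk : 2 ≤ k)
    (Ck : ℝ) (hCk : Ck = ((k : ℝ) + 1) / k + ∑ j ∈ Finset.Icc 1 (k - 1), (1 / (j : ℝ)))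
    (F : ℝ → ℝ) (hF : ∀ ρ : ℝ, F ρ = ρ * Real.log ρ - ρ)
    (P : ℝ → ℝ)
    (hP : ∀ ρ : ℝ, P ρ =
      ρ * (Real.log (ε ^ 2) - 1 - ∑ j ∈ Finset.Icc 1 k, (1 / (j : ℝ)) * (1 - ρ / ε ^ 2) ^ j))
    (Fk : ℝ → ℝ)
    (hFk : ∀ ρ : ℝ, Fk ρ = if ε ^ 2 ≤ ρ then F ρ else P ρ)
    (f : ℝ → ℝ)
    (hf : ∀ ρ : ℝ, 0 < ρ → ρ < ε ^ 2 → f ρ =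
      Real.log (ε ^ 2) - ((k : ℝ) + 1) / k * (1 - ρ / ε ^ 2) ^ k
        - ∑ j ∈ Finset.Icc 1 (k - 1), (1 / (j : ℝ)) * (1 - ρ / ε ^ 2) ^ j)
    (hf' : ∀ ρ : ℝ, ε ^ 2 ≤ ρ → f ρ = Real.log ρ) :
    (∀ ρ : ℝ, 0 ≤ ρ → F ρ - Ck * ρ ≤ Fk ρ) ∧
      (∀ ρ ∈ Set.Ioc (0 : ℝ) (ε ^ 2),
        |f ρ - Real.log ρ| ≤ Ck + Real.log (ε ^ 2 / ρ)) :=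
  stmt16_general ε k Ck hCk F hF P hP Fk hFk f hf hf'
end
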